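/- Fix an integer r ≥ 1. There exists a constant c_r > 0 depending only on r such that the following holds for every positive integer n. Let a = (a_1, ..., a_n) be a vector of integers and suppose there exist integers q_1, ..., q_r and nonnegative integers M_1, ..., M_r such that every coordinate can be written as a_i = x_{i,1} q_1 + ... + x_{i,r} q_r with integers x_{i,j} satisfying |x_{i,j}| ≤ M_j for all i in [n] and j in [r]. Then ρ(a) ≥ c_r / (n^{r/2} · (2M_1+1)·(2M_2+1)···(2M_r+1)). -/

import Mathlib

open scoped BigOperators

/-- The concentration probability `ρ(a)` of an integer vector `a`: the supremum over `x ∈ ℤ` of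
the probability that the Rademacher sum `ε₁a₁ + ⋯ + εₙaₙ` equals `x`. -/
noncomputable def rhoInt (n : ℕ) (a : Fin n → ℤ) : ℝ :=
  ⨆ x : ℤ,
    (Set.ncard {ε : Fin n → Bool | (∑ i, if ε i then a i else -a i) = x} : ℝ) / 2 ^ n

/-!
The Rademacher sum equals `∑ j, S j ε * q j`, where `S j ε = ∑ i, ±x i j` are the signed column
sums. Since `∑ ε, (S j ε)² = 2ⁿ ∑ i, (x i j)² ≤ 2ⁿ n (M j)²`, Chebyshev's inequality and a union
bound over the `r` columns show that for at least half of the sign vectors every `|S j ε|` is at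
most `√(2rn) M j`. Those sign vectors map into an integer box with at most
`(2rn)^(r/2) ∏ j, (2 M j + 1)` points, so by pigeonhole a single point of the box, hence a single
value of the Rademacher sum, is attained by a `1 / (2 · #box)` fraction of all sign vectors.
-/

open Finset

section SignedSum

variable {ι : Type*} [Fintype ι]

def boolSign (b : Bool) : ℤ := if b then 1 else -1

lemma boolSign_not (b : Bool) : boolSign (!b) = -boolSign b := by
  cases b <;> rfl

lemma boolSign_mul_self (b : Bool) : boolSign b * boolSign b = 1 := by
  cases b <;> rfl

def signedSum (ε : ι → Bool) (y : ι → ℤ) : ℤ := ∑ i, boolSign (ε i) * y i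

lemma signedSum_eq_sum_ite (ε : ι → Bool) (y : ι → ℤ) :
    signedSum ε y = ∑ i, if ε i then y i else -y i :=
  sum_congr rfl fun i _ => by cases ε i <;> simp [boolSign]

lemma signedSum_sum_mul {κ : Type*} [Fintype κ] (ε : ι → Bool) (x : ι → κ → ℤ) (q : κ → ℤ) :
    signedSum ε (fun i => ∑ j, x i j * q j) = ∑ j, signedSum ε (fun i => x i j) * q j := by
  simp only [signedSum, mul_sum, sum_mul]
  rw [sum_comm]
  exact sum_congr rfl fun j _ => sum_congr rfl fun i _ => by ring

/-- Flipping the `i`-th sign is a bijection that negates the summand. -/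
lemma sum_boolSign_mul_boolSign_of_ne [DecidableEq ι] {i k : ι} (hik : i ≠ k) :
    ∑ ε : ι → Bool, boolSign (ε i) * boolSign (ε k) = 0 := by
  have hflip : Function.Involutive fun ε : ι → Bool => Function.update ε i (!ε i) := fun ε => by
    simp
  have hneg := Equiv.sum_comp hflip.toPerm fun ε => boolSign (ε i) * boolSign (ε k)
  simp only [Function.Involutive.coe_toPerm, Function.update_self, boolSign_not,
    Function.update_of_ne hik.symm, neg_mul, sum_neg_distrib] at hneg
  linarith

lemma sum_signedSum_sq [DecidableEq ι] (y : ι → ℤ) :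
    ∑ ε : ι → Bool, signedSum ε y ^ 2 = 2 ^ Fintype.card ι * ∑ i, y i ^ 2 := by
  have hcorr : ∀ i k, ∑ ε : ι → Bool, boolSign (ε i) * boolSign (ε k)
      = if i = k then 2 ^ Fintype.card ι else 0 := by
    intro i k
    split_ifs with hik
    · simp [hik, boolSign_mul_self]
    · exact sum_boolSign_mul_boolSign_of_ne hik
  calc ∑ ε : ι → Bool, signedSum ε y ^ 2
      = ∑ i, ∑ k, (∑ ε : ι → Bool, boolSign (ε i) * boolSign (ε k)) * (y i * y k) := by
        simp only [signedSum, sq, sum_mul_sum]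
        simp only [sum_mul]
        rw [sum_comm]
        refine sum_congr rfl fun i _ => ?_
        rw [sum_comm]
        exact sum_congr rfl fun k _ => sum_congr rfl fun ε _ => by ring
    _ = 2 ^ Fintype.card ι * ∑ i, y i ^ 2 := by
        simp only [hcorr, ite_mul, zero_mul, sum_ite_eq, mem_univ, if_true, mul_sum, sq]

end SignedSum

section Chebyshev

variable {ι : Type*} [Fintype ι] [DecidableEq ι]

lemma mul_card_lt_signedSum_sq_le (k : ℕ) (y : ι → ℤ) :
    k * #{ε : ι → Bool | k * ∑ i, y i ^ 2 < signedSum ε y ^ 2} ≤ 2 ^ Fintype.card ι := by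
  set Y := ∑ i, y i ^ 2
  set bad := ({ε : ι → Bool | k * Y < signedSum ε y ^ 2} : Finset _)
  have hY : 0 ≤ Y := sum_nonneg fun i _ => sq_nonneg (y i)
  -- integrality upgrades `k * Y < S²` to `k * Y + 1 ≤ S²`, which also settles the case `Y = 0`
  have hmarkov : (#bad : ℤ) * (k * Y + 1) ≤ 2 ^ Fintype.card ι * Y := by
    rw [← sum_signedSum_sq, ← nsmul_eq_mul]
    refine (card_nsmul_le_sum bad _ _ fun ε hε => (mem_filter.mp hε).2).trans ?_
    exact sum_le_sum_of_subset_of_nonneg (subset_univ _) fun ε _ _ => sq_nonneg _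
  rcases hY.eq_or_lt with hY₀ | hY₀
  · rw [← hY₀, mul_zero, zero_add, mul_one, mul_zero] at hmarkov
    rw [show #bad = 0 by omega, mul_zero]
    exact Nat.zero_le _
  · have : (k * #bad : ℤ) * Y ≤ 2 ^ Fintype.card ι * Y := by nlinarith
    exact_mod_cast le_of_mul_le_mul_right this hY₀

/-- A union bound over the `card κ` columns, each exceptional with probability at most
`1 / (2 card κ)` by Chebyshev. -/
lemma two_pow_le_two_mul_card_forall_signedSum_sq_le {κ : Type*} [Fintype κ] (y : κ → ι → ℤ) :
    2 ^ Fintype.card ι ≤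
      2 * #{ε : ι → Bool | ∀ j, signedSum ε (y j) ^ 2 ≤ 2 * Fintype.card κ * ∑ i, y j i ^ 2} := by
  set r := Fintype.card κ
  set bad := fun j => ({ε : ι → Bool | ((2 * r : ℕ) : ℤ) * ∑ i, y j i ^ 2 < signedSum ε (y j) ^ 2} :
    Finset _)
  have hsplit := card_filter_add_card_filter_not (s := univ)
    fun ε : ι → Bool => ∀ j, signedSum ε (y j) ^ 2 ≤ 2 * r * ∑ i, y j i ^ 2
  rw [card_univ, Fintype.card_fun, Fintype.card_bool] at hsplit
  have hcover : #{ε : ι → Bool | ¬∀ j, signedSum ε (y j) ^ 2 ≤ 2 * r * ∑ i, y j i ^ 2}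
      ≤ ∑ j, #(bad j) := by
    refine (card_le_card fun ε hε => ?_).trans card_biUnion_le
    obtain ⟨j, hj⟩ := not_forall.mp (mem_filter.mp hε).2
    exact mem_biUnion.mpr ⟨j, mem_univ j, mem_filter.mpr ⟨mem_univ ε, by push_cast; omega⟩⟩
  have hunion : r * (2 * ∑ j, #(bad j)) ≤ r * 2 ^ Fintype.card ι := by
    calc r * (2 * ∑ j, #(bad j)) = ∑ j, (2 * r) * #(bad j) := by rw [← mul_sum]; ring
      _ ≤ ∑ _j : κ, 2 ^ Fintype.card ι := sum_le_sum fun j _ => mul_card_lt_signedSum_sq_le _ _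
      _ = r * 2 ^ Fintype.card ι := by rw [sum_const, card_univ, smul_eq_mul]
  rcases Nat.eq_zero_or_pos r with hr | hr
  · have : IsEmpty κ := Fintype.card_eq_zero_iff.mp hr
    rw [filter_true_of_mem fun ε _ j => isEmptyElim j, card_univ, Fintype.card_fun,
      Fintype.card_bool]
    omega
  · have := Nat.le_of_mul_le_mul_left hunion hr
    omega

end Chebyshev

section Concentration

variable {n : ℕ}

lemma card_filter_signedSum_eq_div_le_rhoInt (a : Fin n → ℤ) (v : ℤ) :
    (#{ε : Fin n → Bool | signedSum ε a = v} : ℝ) / 2 ^ n ≤ rhoInt n a := by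
  have hncard : ∀ z : ℤ, {ε : Fin n → Bool | (∑ i, if ε i then a i else -a i) = z}.ncard
      = #{ε : Fin n → Bool | signedSum ε a = z} := fun z => by
    rw [← Set.ncard_coe_finset, coe_filter]
    simp only [signedSum_eq_sum_ite, mem_univ, true_and]
  have hbdd : BddAbove (Set.range fun z : ℤ =>
      (Set.ncard {ε : Fin n → Bool | (∑ i, if ε i then a i else -a i) = z} : ℝ) / 2 ^ n) := by
    refine ⟨1, Set.forall_mem_range.mpr fun z => ?_⟩
    rw [div_le_one (by positivity), hncard]
    exact_mod_cast (card_filter_le _ _).trans (by simp)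
  calc (#{ε : Fin n → Bool | signedSum ε a = v} : ℝ) / 2 ^ n
      = (Set.ncard {ε : Fin n → Bool | (∑ i, if ε i then a i else -a i) = v} : ℝ) / 2 ^ n := by
        rw [hncard]
    _ ≤ rhoInt n a := le_ciSup hbdd v

/-- Pigeonhole: if the Rademacher sum factors through `g`, and `g` maps `s` into `W`, some fibre of
`g` meets `s` in at least `#s / #W` sign vectors, all with the same Rademacher sum. -/
lemma card_div_le_rhoInt {β : Type*} [DecidableEq β] (a : Fin n → ℤ) (F : β → ℤ)
    (g : (Fin n → Bool) → β) (hg : ∀ ε, signedSum ε a = F (g ε)) {s : Finset (Fin n → Bool)}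
    {W : Finset β} (hW : W.Nonempty) (hs : ∀ ε ∈ s, g ε ∈ W) :
    (#s : ℝ) / (#W * 2 ^ n) ≤ rhoInt n a := by
  obtain ⟨w, -, hw⟩ := exists_le_card_fiber_of_nsmul_le_card_of_maps_to hs hW
    (b := (#s : ℝ) / #W) (by rw [nsmul_eq_mul, mul_div_cancel₀ _ (by simpa using hW.ne_empty)])
  have hfibre : {ε ∈ s | g ε = w} ⊆ ({ε | signedSum ε a = F w} : Finset _) := fun ε hε => by
    simp only [mem_filter] at hε ⊢
    exact ⟨mem_univ ε, hε.2 ▸ hg ε⟩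
  calc (#s : ℝ) / (#W * 2 ^ n) = (#s : ℝ) / #W / 2 ^ n := by rw [div_div]
    _ ≤ (#{ε ∈ s | g ε = w} : ℝ) / 2 ^ n := by gcongr
    _ ≤ (#{ε : Fin n → Bool | signedSum ε a = F w} : ℝ) / 2 ^ n := by gcongr
    _ ≤ rhoInt n a := card_filter_signedSum_eq_div_le_rhoInt a (F w)

end Concentration

section IntBox

variable {κ : Type*} [Fintype κ] [DecidableEq κ]

noncomputable def intBox (m : κ → ℕ) : Finset (κ → ℤ) :=
  Fintype.piFinset fun j => Icc (-(m j : ℤ)) (m j)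

lemma mem_intBox {m : κ → ℕ} {w : κ → ℤ} : w ∈ intBox m ↔ ∀ j, |w j| ≤ m j := by
  simp only [intBox, Fintype.mem_piFinset, mem_Icc, abs_le]

lemma intBox_nonempty (m : κ → ℕ) : (intBox m).Nonempty :=
  ⟨0, mem_intBox.mpr fun j => by simp⟩

lemma card_intBox (m : κ → ℕ) : #(intBox m) = ∏ j, (2 * m j + 1) := by
  rw [intBox, Fintype.card_piFinset]
  refine prod_congr rfl fun j _ => ?_
  rw [Int.card_Icc]
  omega

end IntBox

lemma sum_sq_le_card_mul_sq {ι : Type*} [Fintype ι] {y : ι → ℤ} {M : ℕ} (hy : ∀ i, |y i| ≤ M) :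
    ∑ i, (y i : ℝ) ^ 2 ≤ Fintype.card ι * (M : ℝ) ^ 2 := by
  simpa using sum_le_sum fun i (_ : i ∈ univ) =>
    pow_le_pow_left₀ (abs_nonneg _) (by exact_mod_cast hy i : |(y i : ℝ)| ≤ M) 2

lemma abs_le_natFloor_of_sq_le {z : ℤ} {t : ℝ} (ht : 0 ≤ t) (h : (z : ℝ) ^ 2 ≤ t ^ 2) :
    |z| ≤ ⌊t⌋₊ := by
  have habs : (z.natAbs : ℝ) ≤ t := by
    rw [Nat.cast_natAbs, Int.cast_abs]
    exact abs_le_of_sq_le_sq h ht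
  rw [← Int.natCast_natAbs]
  exact_mod_cast Nat.le_floor habs

lemma two_mul_natFloor_mul_add_one_le {t : ℝ} (ht : 1 ≤ t) (M : ℕ) :
    2 * (⌊t * M⌋₊ : ℝ) + 1 ≤ t * (2 * M + 1) := by
  have := Nat.floor_le (by positivity : 0 ≤ t * M)
  nlinarith

lemma Real.sqrt_pow_eq_rpow {x : ℝ} (hx : 0 ≤ x) (k : ℕ) : √x ^ k = x ^ ((k : ℝ) / 2) := by
  rw [Real.sqrt_eq_rpow, ← Real.rpow_natCast, ← Real.rpow_mul hx]
  ring_nf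

lemma one_div_le_rhoInt_of_sum_sq_le {n : ℕ} {κ : Type*} [Fintype κ] [DecidableEq κ]
    (a : Fin n → ℤ) (q : κ → ℤ) (x : Fin n → κ → ℤ) (ha : ∀ i, a i = ∑ j, x i j * q j)
    (R : κ → ℝ) (hR₀ : ∀ j, 0 ≤ R j)
    (hR : ∀ j, 2 * Fintype.card κ * ∑ i, (x i j : ℝ) ^ 2 ≤ R j ^ 2) :
    1 / (2 * ∏ j, (2 * ⌊R j⌋₊ + 1 : ℝ)) ≤ rhoInt n a := by
  set W := intBox fun j => ⌊R j⌋₊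
  set good := ({ε : Fin n → Bool | ∀ j, signedSum ε (fun i => x i j) ^ 2
    ≤ 2 * Fintype.card κ * ∑ i, x i j ^ 2} : Finset _)
  have hhalf : (2 : ℝ) ^ n ≤ 2 * #good := by
    have := two_pow_le_two_mul_card_forall_signedSum_sq_le fun j i => x i j
    rw [Fintype.card_fin] at this
    exact_mod_cast this
  have hmaps : ∀ ε ∈ good, (fun j => signedSum ε fun i => x i j) ∈ W := fun ε hε =>
    mem_intBox.mpr fun j => abs_le_natFloor_of_sq_le (hR₀ j) <| by
      have hS := (mem_filter.mp hε).2 j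
      exact le_trans (by exact_mod_cast hS) (hR j)
  have hρ := card_div_le_rhoInt a (fun w => ∑ j, w j * q j) _
    (fun ε => by rw [show a = _ from funext ha, signedSum_sum_mul]) (intBox_nonempty _) hmaps
  have hW : (0 : ℝ) < #W := by exact_mod_cast (intBox_nonempty _).card_pos
  calc 1 / (2 * ∏ j, (2 * ⌊R j⌋₊ + 1 : ℝ)) = 1 / (2 * #W) := by
        rw [card_intBox]; push_cast; rfl
    _ ≤ #good / (#W * 2 ^ n) := by
        rw [div_le_div_iff₀ (by positivity) (by positivity)]
        nlinarith
    _ ≤ rhoInt n a := hρ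

/-- Fix an integer `r ≥ 1`. There is a constant `c_r > 0`, depending only on `r`, such that for
every positive integer `n` and every integer vector `a = (a₁, …, aₙ)`: if there are integers
`q₁, …, q_r`, nonnegative integers `M₁, …, M_r`, and integers `x_{i,j}` with `|x_{i,j}| ≤ M_j`
and `a_i = x_{i,1}q₁ + ⋯ + x_{i,r}q_r` for all `i, j`, then
`ρ(a) ≥ c_r / (n^{r/2}·(2M₁+1)⋯(2M_r+1))`. -/
theorem gap_lower_bound :
    ∀ r : ℕ, 1 ≤ r → ∃ c : ℝ, 0 < c ∧
      ∀ n : ℕ, 0 < n →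
        ∀ (a : Fin n → ℤ) (q : Fin r → ℤ) (M : Fin r → ℕ) (x : Fin n → Fin r → ℤ),
          (∀ i j, |x i j| ≤ (M j : ℤ)) →
          (∀ i, a i = ∑ j, x i j * q j) →
          c / ((n : ℝ) ^ ((r : ℝ) / 2) * ∏ j, (2 * (M j : ℝ) + 1)) ≤ rhoInt n a := by
  intro r hr
  refine ⟨1 / (2 * √(2 * r) ^ r), by positivity, fun n hn a q M x hx ha => ?_⟩
  set t := √(2 * r * n)
  have ht : 1 ≤ t := Real.one_le_sqrt.mpr (by norm_cast; nlinarith)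
  have hcol : ∀ j, 2 * Fintype.card (Fin r) * ∑ i, (x i j : ℝ) ^ 2 ≤ (t * M j) ^ 2 := fun j => by
    have hsq := sum_sq_le_card_mul_sq fun i => hx i j
    rw [mul_pow, Real.sq_sqrt (by positivity), Fintype.card_fin] at *
    nlinarith
  have hρ := one_div_le_rhoInt_of_sum_sq_le a q x ha (fun j => t * M j) (fun j => by positivity)
    hcol
  have hbox : ∏ j, (2 * ⌊t * M j⌋₊ + 1 : ℝ) ≤
      √(2 * r) ^ r * ((n : ℝ) ^ ((r : ℝ) / 2) * ∏ j, (2 * (M j : ℝ) + 1)) :=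
    calc ∏ j, (2 * ⌊t * M j⌋₊ + 1 : ℝ) ≤ ∏ j, t * (2 * (M j : ℝ) + 1) :=
          prod_le_prod (fun j _ => by positivity) fun j _ => two_mul_natFloor_mul_add_one_le ht _
      _ = √(2 * r) ^ r * ((n : ℝ) ^ ((r : ℝ) / 2) * ∏ j, (2 * (M j : ℝ) + 1)) := by
        rw [prod_mul_distrib, prod_const, card_univ, Fintype.card_fin,
          ← Real.sqrt_pow_eq_rpow n.cast_nonneg, ← mul_assoc, ← mul_pow,
          ← Real.sqrt_mul (by positivity)]
  calc 1 / (2 * √(2 * r) ^ r) / ((n : ℝ) ^ ((r : ℝ) / 2) * ∏ j, (2 * (M j : ℝ) + 1))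
      = 1 / (2 * (√(2 * r) ^ r * ((n : ℝ) ^ ((r : ℝ) / 2) * ∏ j, (2 * (M j : ℝ) + 1)))) := by
        rw [div_div, mul_assoc]
    _ ≤ 1 / (2 * ∏ j, (2 * ⌊t * M j⌋₊ + 1 : ℝ)) := by gcongr
    _ ≤ rhoInt n a := hρ
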